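/- arXiv:2506.01509 — 2 statements merged into one kernel-verified Lean document; each statement's English description precedes it below -/
import Mathlib

section
/- Every extreme point of the polyhedron Q_k (the feasible region of the dual of the multistage auxiliary maximum flow LP) has all coordinates integral. -/
/-- A finite graph: a finite vertex set and a finite set of (oriented representatives of) edges. -/
structure FinGraph (α : Type*) where
  verts : Finset α
  edges : Finset (α × α)

namespace FinGraph

variable {α : Type*}

/-- A matching: a set of edges of `G` that are pairwise vertex-disjoint. -/
def IsMatching (G : FinGraph α) (M : Finset (α × α)) : Prop :=
  M ⊆ G.edges ∧ ∀ e ∈ M, ∀ f ∈ M, e ≠ f →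
    e.1 ≠ f.1 ∧ e.1 ≠ f.2 ∧ e.2 ≠ f.1 ∧ e.2 ≠ f.2

open Classical in
/-- `ν(G)`: the maximum cardinality of a matching of `G`. -/
noncomputable def nu (G : FinGraph α) : ℕ :=
  (G.edges.powerset.filter fun M => G.IsMatching M).sup Finset.card

/-- Well-formedness: edges join two distinct vertices of the graph. -/
def WF (G : FinGraph α) : Prop :=
  ∀ e ∈ G.edges, e.1 ∈ G.verts ∧ e.2 ∈ G.verts ∧ e.1 ≠ e.2

/-- `G` is bipartite with parts `V1`, `V2` (edges oriented from `V1` to `V2`). -/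
def Bipartition [DecidableEq α] (G : FinGraph α) (V1 V2 : Finset α) : Prop :=
  G.verts ⊆ V1 ∪ V2 ∧ ∀ e ∈ G.edges, e.1 ∈ V1 ∧ e.2 ∈ V2

/-- The core of the assignment game on `G`: minimum fractional vertex covers of value `ν(G)`. -/
noncomputable def core (G : FinGraph α) : Set (α → ℝ) :=
  {y | (∀ v ∈ G.verts, 0 ≤ y v) ∧ (∀ e ∈ G.edges, 1 ≤ y e.1 + y e.2) ∧
    ∑ v ∈ G.verts, y v = (G.nu : ℝ)}

/-- The subgraph of `G` induced by the vertex set `U`. -/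
def induce [DecidableEq α] (G : FinGraph α) (U : Finset α) : FinGraph α :=
  ⟨G.verts ∩ U, G.edges.filter fun e => e.1 ∈ U ∧ e.2 ∈ U⟩

end FinGraph

/-- A real number is integral if it is an integer. -/
def IntegralReal (x : ℝ) : Prop := ∃ n : ℤ, x = (n : ℝ)

open FinGraph

variable {α : Type*}

/-- A point of the multistage LP: stage allocations `y^i` (`i = 0, …, k-1`, zero-based) and
deviation variables `δ^i`, `d^i` (`i = 0, …, k-2`) linking consecutive stages. -/
abbrev MultiStagePt (α : Type*) : Type _ :=
  (ℕ → α → ℝ) × (ℕ → α → ℝ) × (ℕ → α → ℝ)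

/-- The relaxed feasible region `D_k` of the multistage LP (no matching-number equalities). -/
def regionDk [DecidableEq α] (k : ℕ) (G : ℕ → FinGraph α) :
    Set (MultiStagePt α) :=
  {p | (∀ i < k, (∀ v ∈ (G i).verts, 0 ≤ p.1 i v) ∧
         (∀ e ∈ (G i).edges, 1 ≤ p.1 i e.1 + p.1 i e.2)) ∧
       (∀ i, i + 1 < k → ∀ v ∈ (G i).verts ∩ (G (i + 1)).verts,
         p.1 i v - p.1 (i + 1) v ≤ p.2.1 i v ∧
         p.1 (i + 1) v - p.1 i v ≤ p.2.2 i v ∧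
         0 ≤ p.2.1 i v ∧ 0 ≤ p.2.2 i v)}

/-- The feasible region `P_k` of the multistage LP: `D_k` together with the matching-number
equalities. -/
noncomputable def regionPk [DecidableEq α] (k : ℕ) (G : ℕ → FinGraph α) :
    Set (MultiStagePt α) :=
  {p ∈ regionDk k G | ∀ i < k, ∑ v ∈ (G i).verts, p.1 i v = ((G i).nu : ℝ)}

/-- The multistage dual-flow polyhedron `Q_k`: points of `D_k` extended by potentials `γ^i`. -/
def regionQk [DecidableEq α] (k : ℕ) (G : ℕ → FinGraph α) (Vs Vt : Finset α) :
    Set (MultiStagePt α × (ℕ → α → ℝ)) :=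
  {q | (∀ i < k, ∀ v ∈ (G i).verts ∩ Vs, 1 ≤ q.2 i v + q.1.1 i v) ∧
       (∀ i, i + 1 < k → ∀ v ∈ ((G i).verts ∩ (G (i + 1)).verts) ∩ Vs,
          0 ≤ q.2 i v - q.2 (i + 1) v + q.1.2.1 i v ∧
          0 ≤ q.2 (i + 1) v - q.2 i v + q.1.2.2 i v) ∧
       (∀ i < k, ∀ e ∈ (G i).edges, e.1 ∈ Vs → e.2 ∈ Vt →
          0 ≤ q.2 i e.2 - q.2 i e.1) ∧
       (∀ i < k, ∀ v ∈ (G i).verts ∩ Vt, 0 ≤ q.1.1 i v - q.2 i v) ∧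
       (∀ i, i + 1 < k → ∀ v ∈ ((G i).verts ∩ (G (i + 1)).verts) ∩ Vt,
          0 ≤ q.2 (i + 1) v - q.2 i v + q.1.2.1 i v ∧
          0 ≤ q.2 i v - q.2 (i + 1) v + q.1.2.2 i v) ∧
       (∀ i < k, ∀ v ∈ (G i).verts, 0 ≤ q.1.1 i v) ∧
       (∀ i, i + 1 < k → ∀ v ∈ (G i).verts ∩ (G (i + 1)).verts,
          0 ≤ q.1.2.1 i v ∧ 0 ≤ q.1.2.2 i v)}

/-- A linear objective on the multistage variables `(y^i, δ^i, d^i)`, with coefficient functions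
`cy`, `cδ`, `cd`. -/
def objCk [DecidableEq α] (k : ℕ) (G : ℕ → FinGraph α)
    (cy cδ cd : ℕ → α → ℝ) (p : MultiStagePt α) : ℝ :=
  ∑ i ∈ Finset.range k, ∑ v ∈ (G i).verts, cy i v * p.1 i v
    + ∑ i ∈ Finset.range (k - 1), ∑ v ∈ (G i).verts ∩ (G (i + 1)).verts,
        (cδ i v * p.2.1 i v + cd i v * p.2.2 i v)

/-- The multistage dual-flow polyhedron `Q_k`, embedded in the ambient product space by requiring
all variables to vanish outside their index sets (`y^i, γ^i ∈ ℝ^{V_i}` for `i < k`,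
`δ^i, d^i ∈ ℝ^{V_i ∩ V_{i+1}}` for `i + 1 < k`). -/
def regionQkEmb [DecidableEq α] (k : ℕ) (G : ℕ → FinGraph α) (Vs Vt : Finset α) :
    Set (MultiStagePt α × (ℕ → α → ℝ)) :=
  {q ∈ regionQk k G Vs Vt |
    (∀ i v, ¬(i < k ∧ v ∈ (G i).verts) → q.1.1 i v = 0 ∧ q.2 i v = 0) ∧
    (∀ i v, ¬(i + 1 < k ∧ v ∈ (G i).verts ∩ (G (i + 1)).verts) →
        q.1.2.1 i v = 0 ∧ q.1.2.2 i v = 0)}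

/-!
At an extreme point of `Q_k` the variables `y, δ, d` are determined by the potentials `γ`:
raising any of them keeps the point in `Q_k`, so each sits at the least value `max 0 (·)` that
`γ` allows, or else the point is the midpoint of its lowering and a raising. If some potential
takes a non-integral value `x₀`, shift every potential equal to `x₀` by `±ε` and recompute
`y, δ, d`. Every constraint compares two potentials, or a potential with `0` or `1`, so for small
`ε` both shifted points lie in `Q_k` and average to the original one, contradicting
extremality. Integral potentials then give integral `y, δ, d`.
-/

open Filter Topology

theorem eq_of_mem_extremePoints_of_add_eq {E : Type*} [AddCommGroup E] [Module ℝ E]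
    {S : Set E} {q a b : E} (hq : q ∈ S.extremePoints ℝ) (ha : a ∈ S) (hb : b ∈ S)
    (hab : a + b = (2 : ℝ) • q) : a = q :=
  hq.2 ha hb ⟨1 / 2, 1 / 2, by norm_num, by norm_num, by norm_num, by
    rw [← smul_add, hab, smul_smul]; norm_num⟩

theorem eventually_eq_of_mem_extremePoints {E : Type*} [AddCommGroup E] [Module ℝ E]
    {S : Set E} {q : E} {x : ℝ → E} (hq : q ∈ S.extremePoints ℝ)
    (hmem : ∀ᶠ ε in 𝓝 0, x ε ∈ S) (hmid : ∀ᶠ ε in 𝓝 0, x ε + x (-ε) = (2 : ℝ) • q) :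
    ∀ᶠ ε in 𝓝 0, x ε = q := by
  have hneg : ∀ᶠ ε in 𝓝 (0 : ℝ), x (-ε) ∈ S :=
    (continuous_neg.tendsto' (0 : ℝ) 0 neg_zero).eventually hmem
  filter_upwards [hmem, hneg, hmid] with ε h₁ h₂ h₃
  exact eq_of_mem_extremePoints_of_add_eq hq h₁ h₂ h₃

theorem tendsto_add_mul_nhds_zero (a b : ℝ) :
    Tendsto (fun ε : ℝ => a + ε * b) (𝓝 0) (𝓝 a) :=
  (continuous_const.add (continuous_id.mul continuous_const)).tendsto' 0 a (by simp)

theorem eventually_nonneg_add_mul {a b : ℝ} (ha : 0 ≤ a) (hab : a = 0 → b = 0) :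
    ∀ᶠ ε in 𝓝 0, 0 ≤ a + ε * b := by
  rcases ha.eq_or_lt with rfl | ha
  · simp [hab rfl]
  · exact ((tendsto_add_mul_nhds_zero a b).eventually (lt_mem_nhds ha)).mono fun _ h => h.le

theorem eventually_max_zero_add_mul_add {a b : ℝ} (hab : a = 0 → b = 0) :
    ∀ᶠ ε in 𝓝 0, max 0 (a + ε * b) + max 0 (a + -ε * b) = 2 * max 0 a := by
  have hlim := tendsto_add_mul_nhds_zero a
  rcases lt_trichotomy a 0 with ha | rfl | ha
  · filter_upwards [(hlim b).eventually (gt_mem_nhds ha),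
      (hlim (-b)).eventually (gt_mem_nhds ha)] with ε h₁ h₂
    rw [neg_mul, ← mul_neg]
    simp only [max_eq_left h₁.le, max_eq_left h₂.le, max_eq_left ha.le]; ring
  · simp [hab rfl]
  · filter_upwards [(hlim b).eventually (lt_mem_nhds ha),
      (hlim (-b)).eventually (lt_mem_nhds ha)] with ε h₁ h₂
    rw [neg_mul, ← mul_neg]
    simp only [max_eq_right h₁.le, max_eq_right h₂.le, max_eq_right ha.le]; ring

theorem not_eventually_eq_zero : ¬ ∀ᶠ ε in 𝓝 (0 : ℝ), ε = 0 := fun h =>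
  let ⟨_, h₀, hne⟩ :=
    ((h.filter_mono nhdsWithin_le_nhds).and (self_mem_nhdsWithin (s := {0}ᶜ))).exists
  hne h₀

noncomputable def levelShift (x₀ ε x : ℝ) : ℝ := x + ε * if x = x₀ then 1 else 0

theorem levelShift_of_ne {x₀ x : ℝ} (ε : ℝ) (h : x ≠ x₀) : levelShift x₀ ε x = x := by
  simp [levelShift, h]

theorem levelShift_sub_levelShift (x₀ ε u w : ℝ) :
    levelShift x₀ ε u - levelShift x₀ ε w =
      (u - w) + ε * ((if u = x₀ then 1 else 0) - if w = x₀ then 1 else 0) := by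
  simp only [levelShift]; ring

theorem eventually_levelShift {T : Set ℝ} (hT : T.Finite) (x₀ : ℝ) :
    ∀ᶠ ε in 𝓝 0, ∀ u ∈ T, ∀ w ∈ T,
      (w ≤ u → levelShift x₀ ε w ≤ levelShift x₀ ε u) ∧
      max 0 (levelShift x₀ ε u - levelShift x₀ ε w) +
        max 0 (levelShift x₀ (-ε) u - levelShift x₀ (-ε) w) = 2 * max 0 (u - w) := by
  refine (eventually_all_finite hT).2 fun u _ => (eventually_all_finite hT).2 fun w _ => ?_
  have hab : u - w = 0 →
      ((if u = x₀ then 1 else 0) - if w = x₀ then 1 else 0 : ℝ) = 0 := fun h => by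
    rw [sub_eq_zero.1 h, sub_self]
  simp only [← sub_nonneg (b := levelShift x₀ _ w), levelShift_sub_levelShift, eventually_and]
  exact ⟨eventually_imp_distrib_left.2 fun h => eventually_nonneg_add_mul (sub_nonneg.2 h) hab,
    eventually_max_zero_add_mul_add hab⟩

theorem integralReal_zero : IntegralReal 0 := ⟨0, Int.cast_zero.symm⟩

theorem integralReal_one : IntegralReal 1 := ⟨1, Int.cast_one.symm⟩

theorem IntegralReal.sub {a b : ℝ} : IntegralReal a → IntegralReal b → IntegralReal (a - b)
  | ⟨m, hm⟩, ⟨n, hn⟩ => ⟨m - n, by rw [hm, hn, Int.cast_sub]⟩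

theorem IntegralReal.zero_max {a : ℝ} : IntegralReal a → IntegralReal (max 0 a)
  | ⟨m, hm⟩ => ⟨max 0 m, by rw [hm, Int.cast_max, Int.cast_zero]⟩

section Completion

variable [DecidableEq α] {k : ℕ} {G : ℕ → FinGraph α} {Vs Vt : Finset α}

variable (k G Vs) in
def completion (γ : ℕ → α → ℝ) : MultiStagePt α × (ℕ → α → ℝ) :=
  ((fun i v => if i < k ∧ v ∈ (G i).verts then
        if v ∈ Vs then max 0 (1 - γ i v) else max 0 (γ i v) else 0,
    fun i v => if i + 1 < k ∧ v ∈ (G i).verts ∩ (G (i + 1)).verts then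
        if v ∈ Vs then max 0 (γ (i + 1) v - γ i v) else max 0 (γ i v - γ (i + 1) v) else 0,
    fun i v => if i + 1 < k ∧ v ∈ (G i).verts ∩ (G (i + 1)).verts then
        if v ∈ Vs then max 0 (γ i v - γ (i + 1) v) else max 0 (γ (i + 1) v - γ i v) else 0),
   γ)

theorem completion_mem_regionQkEmb {γ : ℕ → α → ℝ} (hdisj : Disjoint Vs Vt)
    (hedge : ∀ i < k, ∀ e ∈ (G i).edges, e.1 ∈ Vs → e.2 ∈ Vt → γ i e.1 ≤ γ i e.2)
    (hsupp : ∀ i v, ¬(i < k ∧ v ∈ (G i).verts) → γ i v = 0) :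
    completion k G Vs γ ∈ regionQkEmb k G Vs Vt := by
  have hVt : ∀ {v}, v ∈ Vt → v ∉ Vs := fun hv => Finset.disjoint_right.1 hdisj hv
  refine ⟨⟨?_, ?_, ?_, ?_, ?_, ?_, ?_⟩, ?_, ?_⟩
  · intro i hi v hv
    simp only [Finset.mem_inter] at hv
    simp only [completion, if_pos (And.intro hi hv.1), if_pos hv.2]
    linarith [le_max_right 0 (1 - γ i v)]
  · intro i hi v hv
    simp only [Finset.mem_inter] at hv
    simp only [completion, Finset.mem_inter, if_pos (And.intro hi hv.1), if_pos hv.2]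
    constructor <;> linarith [le_max_right 0 (γ (i + 1) v - γ i v),
      le_max_right 0 (γ i v - γ (i + 1) v)]
  · intro i hi e he he₁ he₂
    exact sub_nonneg.2 (hedge i hi e he he₁ he₂)
  · intro i hi v hv
    simp only [Finset.mem_inter] at hv
    simp only [completion, if_pos (And.intro hi hv.1), if_neg (hVt hv.2)]
    linarith [le_max_right 0 (γ i v)]
  · intro i hi v hv
    simp only [Finset.mem_inter] at hv
    simp only [completion, Finset.mem_inter, if_pos (And.intro hi hv.1), if_neg (hVt hv.2)]
    constructor <;> linarith [le_max_right 0 (γ (i + 1) v - γ i v),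
      le_max_right 0 (γ i v - γ (i + 1) v)]
  · intro i _ v _
    simp only [completion]
    split_ifs <;> simp
  · intro i _ v _
    simp only [completion]
    constructor <;> split_ifs <;> simp
  · intro i v h
    simp only [completion, if_neg h, hsupp i v h, and_self]
  · intro i v h
    simp only [completion, if_neg h, and_self]

theorem completion_fst_le (hcover : ∀ i < k, (G i).verts ⊆ Vs ∪ Vt)
    {q : MultiStagePt α × (ℕ → α → ℝ)} (hq : q ∈ regionQkEmb k G Vs Vt) :
    (completion k G Vs q.2).1 ≤ q.1 := by
  obtain ⟨⟨h₁, h₂, -, h₄, h₅, h₆, h₇⟩, hs₁, hs₂⟩ := hq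
  have hVt : ∀ {i v}, i < k → v ∈ (G i).verts → v ∉ Vs → v ∈ Vt := fun hi hv hVs =>
    (Finset.mem_union.1 (hcover _ hi hv)).resolve_left hVs
  refine ⟨fun i v => ?_, fun i v => ?_, fun i v => ?_⟩ <;> simp only [completion] <;>
    split_ifs with hsupp hVs
  · exact max_le (h₆ i hsupp.1 v hsupp.2)
      (by linarith [h₁ i hsupp.1 v (Finset.mem_inter.2 ⟨hsupp.2, hVs⟩)])
  · exact max_le (h₆ i hsupp.1 v hsupp.2)
      (by linarith [h₄ i hsupp.1 v (Finset.mem_inter.2 ⟨hsupp.2, hVt hsupp.1 hsupp.2 hVs⟩)])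
  · exact (hs₁ i v hsupp).1.ge
  · exact max_le (h₇ i hsupp.1 v hsupp.2).1
      (by linarith [(h₂ i hsupp.1 v (Finset.mem_inter.2 ⟨hsupp.2, hVs⟩)).1])
  · have hv := hVt (Nat.lt_of_succ_lt hsupp.1) (Finset.mem_inter.1 hsupp.2).1 hVs
    exact max_le (h₇ i hsupp.1 v hsupp.2).1
      (by linarith [(h₅ i hsupp.1 v (Finset.mem_inter.2 ⟨hsupp.2, hv⟩)).1])
  · exact (hs₂ i v hsupp).1.ge
  · exact max_le (h₇ i hsupp.1 v hsupp.2).2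
      (by linarith [(h₂ i hsupp.1 v (Finset.mem_inter.2 ⟨hsupp.2, hVs⟩)).2])
  · have hv := hVt (Nat.lt_of_succ_lt hsupp.1) (Finset.mem_inter.1 hsupp.2).1 hVs
    exact max_le (h₇ i hsupp.1 v hsupp.2).2
      (by linarith [(h₅ i hsupp.1 v (Finset.mem_inter.2 ⟨hsupp.2, hv⟩)).2])
  · exact (hs₂ i v hsupp).2.ge

theorem mem_regionQk_of_le {p q : MultiStagePt α × (ℕ → α → ℝ)}
    (hp : p ∈ regionQk k G Vs Vt) (hle : p.1 ≤ q.1) (hγ : p.2 = q.2) :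
    q ∈ regionQk k G Vs Vt := by
  obtain ⟨⟨y, δ, d⟩, γ⟩ := q
  obtain ⟨⟨y', δ', d'⟩, γ'⟩ := p
  obtain ⟨hy, hδ, hd⟩ := hle
  obtain rfl : γ' = γ := hγ
  obtain ⟨h₁, h₂, h₃, h₄, h₅, h₆, h₇⟩ := hp
  exact ⟨fun i hi v hv => by linarith [h₁ i hi v hv, hy i v],
    fun i hi v hv => ⟨by linarith [(h₂ i hi v hv).1, hδ i v],
      by linarith [(h₂ i hi v hv).2, hd i v]⟩,
    h₃, fun i hi v hv => by linarith [h₄ i hi v hv, hy i v],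
    fun i hi v hv => ⟨by linarith [(h₅ i hi v hv).1, hδ i v],
      by linarith [(h₅ i hi v hv).2, hd i v]⟩,
    fun i hi v hv => (h₆ i hi v hv).trans (hy i v),
    fun i hi v hv => ⟨(h₇ i hi v hv).1.trans (hδ i v), (h₇ i hi v hv).2.trans (hd i v)⟩⟩

theorem two_smul_sub_mem_regionQkEmb {p q : MultiStagePt α × (ℕ → α → ℝ)}
    (hp : p ∈ regionQkEmb k G Vs Vt) (hq : q ∈ regionQkEmb k G Vs Vt)
    (hle : p.1 ≤ q.1) (hγ : p.2 = q.2) :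
    (2 : ℝ) • q - p ∈ regionQkEmb k G Vs Vt := by
  refine ⟨mem_regionQk_of_le hp.1 ?_ ?_, fun i v h => ?_, fun i v h => ?_⟩
  · rw [Prod.fst_sub, Prod.smul_fst, le_sub_iff_add_le, two_smul]
    exact add_le_add hle hle
  · rw [Prod.snd_sub, Prod.smul_snd, hγ, two_smul, add_sub_cancel_right]
  · simp [hp.2.1 i v h, hq.2.1 i v h]
  · simp [hp.2.2 i v h, hq.2.2 i v h]

theorem completion_eq_of_mem_extremePoints (hdisj : Disjoint Vs Vt)
    (hcover : ∀ i < k, (G i).verts ⊆ Vs ∪ Vt) {q : MultiStagePt α × (ℕ → α → ℝ)}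
    (hq : q ∈ (regionQkEmb k G Vs Vt).extremePoints ℝ) :
    completion k G Vs q.2 = q := by
  have hp : completion k G Vs q.2 ∈ regionQkEmb k G Vs Vt :=
    completion_mem_regionQkEmb hdisj
      (fun i hi e he h₁ h₂ => sub_nonneg.1 (hq.1.1.2.2.1 i hi e he h₁ h₂))
      (fun i v h => (hq.1.2.1 i v h).2)
  exact eq_of_mem_extremePoints_of_add_eq hq hp
    (two_smul_sub_mem_regionQkEmb hp hq.1 (completion_fst_le hcover hq.1) rfl)
    (add_sub_cancel _ _)

theorem completion_levelShift_add {γ : ℕ → α → ℝ} {T : Set ℝ} {x₀ ε : ℝ}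
    (h₀ : (0 : ℝ) ≠ x₀) (h₁ : (1 : ℝ) ≠ x₀) (hT₀ : 0 ∈ T) (hT₁ : 1 ∈ T)
    (hγT : ∀ i v, γ i v ∈ T)
    (hε : ∀ u ∈ T, ∀ w ∈ T, max 0 (levelShift x₀ ε u - levelShift x₀ ε w) +
      max 0 (levelShift x₀ (-ε) u - levelShift x₀ (-ε) w) = 2 * max 0 (u - w)) :
    completion k G Vs (fun i v => levelShift x₀ ε (γ i v)) +
      completion k G Vs (fun i v => levelShift x₀ (-ε) (γ i v)) =
      (2 : ℝ) • completion k G Vs γ := by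
  have hpair : ∀ i j v w, _ := fun i j v w => hε _ (hγT i v) _ (hγT j w)
  have hVs : ∀ i v, _ := fun i v => hε 1 hT₁ _ (hγT i v)
  have hVt : ∀ i v, _ := fun i v => hε _ (hγT i v) 0 hT₀
  simp only [levelShift_of_ne _ h₀, levelShift_of_ne _ h₁, sub_zero] at hVs hVt
  refine Prod.ext (Prod.ext ?_ (Prod.ext ?_ ?_)) ?_ <;> funext i v <;>
    simp only [completion, Prod.fst_add, Prod.snd_add, Prod.smul_fst, Prod.smul_snd,
      Pi.add_apply, Pi.smul_apply, smul_eq_mul]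
  · split_ifs <;> simp [hVs, hVt]
  · split_ifs <;> simp [hpair]
  · split_ifs <;> simp [hpair]
  · simp only [levelShift]; ring

theorem finite_range_of_supported {γ : ℕ → α → ℝ}
    (hsupp : ∀ i v, ¬(i < k ∧ v ∈ (G i).verts) → γ i v = 0) :
    (Set.range fun p : ℕ × α => γ p.1 p.2).Finite := by
  refine ((Finset.finite_toSet
    ((Finset.range k).biUnion fun i => (G i).verts.image (γ i))).insert 0).subset ?_
  rintro _ ⟨⟨i, v⟩, rfl⟩
  by_cases h : i < k ∧ v ∈ (G i).verts
  · exact Or.inr (by simpa using ⟨i, h.1, v, h.2, rfl⟩)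
  · exact Or.inl (hsupp i v h)

theorem integralReal_completion {γ : ℕ → α → ℝ} (hγ : ∀ i v, IntegralReal (γ i v)) :
    (∀ i v, IntegralReal ((completion k G Vs γ).1.1 i v)) ∧
    (∀ i v, IntegralReal ((completion k G Vs γ).1.2.1 i v)) ∧
    (∀ i v, IntegralReal ((completion k G Vs γ).1.2.2 i v)) := by
  refine ⟨fun i v => ?_, fun i v => ?_, fun i v => ?_⟩ <;> simp only [completion] <;>
    split_ifs <;>
    first
    | exact integralReal_zero
    | exact (integralReal_one.sub (hγ _ _)).zero_max
    | exact (hγ _ _).zero_max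
    | exact ((hγ _ _).sub (hγ _ _)).zero_max

theorem integralReal_snd_of_mem_extremePoints (hdisj : Disjoint Vs Vt)
    (hcover : ∀ i < k, (G i).verts ⊆ Vs ∪ Vt) {q : MultiStagePt α × (ℕ → α → ℝ)}
    (hq : q ∈ (regionQkEmb k G Vs Vt).extremePoints ℝ) (i₀ : ℕ) (v₀ : α) :
    IntegralReal (q.2 i₀ v₀) := by
  by_contra hfrac
  set x₀ := q.2 i₀ v₀
  have hne : ∀ n : ℤ, (n : ℝ) ≠ x₀ := fun n h => hfrac ⟨n, h.symm⟩
  have h₀ : (0 : ℝ) ≠ x₀ := by exact_mod_cast hne 0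
  have h₁ : (1 : ℝ) ≠ x₀ := by exact_mod_cast hne 1
  set T : Set ℝ := insert 0 (insert 1 (Set.range fun p : ℕ × α => q.2 p.1 p.2))
  have hT : T.Finite :=
    ((finite_range_of_supported fun i v h => (hq.1.2.1 i v h).2).insert 1).insert 0
  have hγT : ∀ i v, q.2 i v ∈ T := fun i v => Or.inr (Or.inr ⟨(i, v), rfl⟩)
  set γ : ℝ → ℕ → α → ℝ := fun ε i v => levelShift x₀ ε (q.2 i v)
  have hmem : ∀ᶠ ε in 𝓝 0, completion k G Vs (γ ε) ∈ regionQkEmb k G Vs Vt := by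
    filter_upwards [eventually_levelShift hT x₀] with ε hε
    refine completion_mem_regionQkEmb hdisj (fun i hi e he h₁ h₂ => (hε _ (hγT i e.2) _
      (hγT i e.1)).1 (sub_nonneg.1 (hq.1.1.2.2.1 i hi e he h₁ h₂))) (fun i v h => ?_)
    simp only [γ, (hq.1.2.1 i v h).2, levelShift_of_ne _ h₀]
  have hmid : ∀ᶠ ε in 𝓝 0,
      completion k G Vs (γ ε) + completion k G Vs (γ (-ε)) = (2 : ℝ) • q := by
    filter_upwards [eventually_levelShift hT x₀] with ε hε
    conv_rhs => rw [← completion_eq_of_mem_extremePoints hdisj hcover hq]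
    exact completion_levelShift_add h₀ h₁ (by simp [T]) (by simp [T]) hγT
      fun u hu w hw => (hε u hu w hw).2
  refine not_eventually_eq_zero ?_
  filter_upwards [eventually_eq_of_mem_extremePoints hq hmem hmid] with ε h
  simpa [γ, completion, levelShift, x₀] using congrFun (congrFun (congrArg Prod.snd h) i₀) v₀

end Completion

theorem extremePoints_regionQk_integral_general [DecidableEq α]
    (k : ℕ) (G : ℕ → FinGraph α) (Vs Vt : Finset α)
    (hdisj : Disjoint Vs Vt)
    (hbip : ∀ i < k, (G i).Bipartition Vs Vt)
    (q : MultiStagePt α × (ℕ → α → ℝ))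
    (hq : q ∈ Set.extremePoints ℝ (regionQkEmb k G Vs Vt)) :
    (∀ i v, IntegralReal (q.1.1 i v)) ∧ (∀ i v, IntegralReal (q.1.2.1 i v)) ∧
    (∀ i v, IntegralReal (q.1.2.2 i v)) ∧ (∀ i v, IntegralReal (q.2 i v)) := by
  have hcover : ∀ i < k, (G i).verts ⊆ Vs ∪ Vt := fun i hi => (hbip i hi).1
  have hγ := integralReal_snd_of_mem_extremePoints hdisj hcover hq
  rw [← completion_eq_of_mem_extremePoints hdisj hcover hq]
  obtain ⟨hy, hδ, hd⟩ := integralReal_completion (k := k) (G := G) (Vs := Vs) hγ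
  exact ⟨hy, hδ, hd, hγ⟩

/-- Every extreme point of the polyhedron `Q_k` (the feasible region of the
dual of the multistage auxiliary maximum flow LP) has all coordinates integral. -/
theorem extremePoints_regionQk_integral [DecidableEq α]
    (k : ℕ) (hk : 1 ≤ k) (G : ℕ → FinGraph α) (Vs Vt : Finset α)
    (hdisj : Disjoint Vs Vt)
    (hWF : ∀ i < k, (G i).WF) (hbip : ∀ i < k, (G i).Bipartition Vs Vt)
    (q : MultiStagePt α × (ℕ → α → ℝ))
    (hq : q ∈ Set.extremePoints ℝ (regionQkEmb k G Vs Vt)) :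
    (∀ i v, IntegralReal (q.1.1 i v)) ∧ (∀ i v, IntegralReal (q.1.2.1 i v)) ∧
    (∀ i v, IntegralReal (q.1.2.2 i v)) ∧ (∀ i v, IntegralReal (q.2 i v)) :=
  extremePoints_regionQk_integral_general k G Vs Vt hdisj hbip q hq
end

section
/- Let α^i ∈ ℝ^{V_i} be arbitrary for i = 1,…,k, β^i, b^i ∈ ℝ^{V_i∩V_{i+1}} nonnegative for i = 1,…,k−1, and set ε = 1/(1 + Σ_{i=1}^k Σ_{v∈V_i}|α^i_v| + Σ_{i=1}^{k−1} Σ_{v∈V_i∩V_{i+1}}(β^i_v + b^i_v)). If μ̂ = ((ŷ^i), (δ̂^i), (d̂^i)) is an integral (all coordinates integer) minimizer over the region D_k of the objective F_ε(μ) = Σ_{i=1}^k Σ_{v∈V_i} y^i_v + ε·(Σ_{i=1}^k Σ_{v∈V_i} α^i_v y^i_v + Σ_{i=1}^{k−1} Σ_{v∈V_i∩V_{i+1}} (β^i_v δ^i_v + b^i_v d^i_v)), then μ̂ satisfies Σ_{v∈V_i} ŷ^i_v = ν(G_i) for all i (hence μ̂ ∈ P_k), and μ̂ minimizes G(μ)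 = Σ_{i=1}^k Σ_{v∈V_i} α^i_v y^i_v + Σ_{i=1}^{k−1} Σ_{v∈V_i∩V_{i+1}} (β^i_v δ^i_v + b^i_v d^i_v) over P_k. -/
open FinGraph

variable {α : Type*}

/-!
Cap the stage allocations of the minimizer `μ` at `1`. The capped point stays in `D_k`, and since
`ε (1 + |a|) ≤ 1` capping lowers `F_ε` by at least `ε` times the drop of `Σ y`; minimality makes
that drop zero, so the capped point is again a minimizer, with the same `Σ y`. Compare it with the
point `y^i = 1_{C_i}`, `δ = d = 1` built from König covers `C_i`: its `Σ y` is at most `Σ ν(G_i)`,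
and the linear objective differs by at most `Σ |a| + Σ (β + b)`, which `ε` scales below `1`. Hence
`Σ y < Σ ν(G_i) + 1`, so `Σ y ≤ Σ ν(G_i)` by integrality, while weak duality gives
`ν(G_i) ≤ Σ y^i` in every stage. On `P_k` the term `Σ y` is constant, so there minimizing `F_ε`
means minimizing the linear objective.
-/

open Finset

namespace FinGraph

lemma card_le_nu {G : FinGraph α} {M : Finset (α × α)} (hM : G.IsMatching M) :
    #M ≤ G.nu := by
  classical
  exact le_sup (mem_filter.2 ⟨mem_powerset.2 hM.1, hM⟩)

lemma exists_isMatching_card_eq_nu (G : FinGraph α) :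
    ∃ M, G.IsMatching M ∧ #M = G.nu := by
  classical
  have hne : (G.edges.powerset.filter G.IsMatching).Nonempty :=
    ⟨∅, mem_filter.2 ⟨empty_mem_powerset _, empty_subset _, by simp⟩⟩
  obtain ⟨M, hM, hcard⟩ := exists_mem_eq_sup _ hne card
  exact ⟨M, (mem_filter.1 hM).2, hcard.symm⟩

lemma nu_le_sum_of_fractional_cover [DecidableEq α] {G : FinGraph α} (hG : G.WF) {y : α → ℝ}
    (hy₀ : ∀ v ∈ G.verts, 0 ≤ y v) (hy₁ : ∀ e ∈ G.edges, 1 ≤ y e.1 + y e.2) :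
    (G.nu : ℝ) ≤ ∑ v ∈ G.verts, y v := by
  obtain ⟨M, hM, hcard⟩ := G.exists_isMatching_card_eq_nu
  have hdisj : (M : Set (α × α)).PairwiseDisjoint fun e => ({e.1, e.2} : Finset α) := by
    intro e he f hf hef
    obtain ⟨h₁, h₂, h₃, h₄⟩ := hM.2 e he f hf hef
    simp only [Function.onFun, disjoint_insert_left, disjoint_insert_right, disjoint_singleton,
      mem_insert, mem_singleton, not_or]
    grind
  have hsub : M.biUnion (fun e => {e.1, e.2}) ⊆ G.verts := by
    simp only [biUnion_subset, insert_subset_iff, singleton_subset_iff]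
    exact fun e he => ⟨(hG e (hM.1 he)).1, (hG e (hM.1 he)).2.1⟩
  calc (G.nu : ℝ) = ∑ _e ∈ M, (1 : ℝ) := by simp [hcard]
    _ ≤ ∑ e ∈ M, (y e.1 + y e.2) := sum_le_sum fun e he => hy₁ e (hM.1 he)
    _ = ∑ v ∈ M.biUnion (fun e => {e.1, e.2}), y v := by
        rw [sum_biUnion hdisj]
        exact sum_congr rfl fun e he => (sum_pair (hG e (hM.1 he)).2.2).symm
    _ ≤ ∑ v ∈ G.verts, y v := sum_le_sum_of_subset_of_nonneg hsub fun v hv _ => hy₀ v hv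

end FinGraph

theorem Finset.exists_injective_disjSum_of_card_le_card_biUnion_add {ι β : Type*}
    [DecidableEq β] (X : Finset ι) (t : ι → Finset β) (d : ℕ)
    (h : ∀ s ⊆ X, #s ≤ #(s.biUnion t) + d) :
    ∃ F : X → β ⊕ Fin d, Function.Injective F ∧ ∀ x : X, F x ∈ (t x).disjSum univ := by
  refine (all_card_le_biUnion_card_iff_exists_injective _).1 fun s => ?_
  rcases s.eq_empty_or_nonempty with rfl | ⟨x₀, hx₀⟩
  · simp
  calc #s = #(s.map (Function.Embedding.subtype _)) := (card_map _).symm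
    _ ≤ #((s.map (Function.Embedding.subtype _)).biUnion t) + d :=
        h _ fun x hx => by obtain ⟨x, -, rfl⟩ := mem_map.1 hx; exact x.2
    _ = #((s.biUnion fun x => t x).disjSum (univ : Finset (Fin d))) := by
        classical simp [card_disjSum, map_eq_image, image_biUnion]
    _ ≤ #(s.biUnion fun x => (t x).disjSum univ) := by
        refine card_le_card ?_
        rintro (y | j) hz
        · obtain ⟨x, hx, hy⟩ := mem_biUnion.1 (inl_mem_disjSum.1 hz)
          exact mem_biUnion.2 ⟨x, hx, inl_mem_disjSum.2 hy⟩
        · exact mem_biUnion.2 ⟨x₀, hx₀, inr_mem_disjSum.2 (mem_univ j)⟩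

theorem Finset.exists_matching_of_card_le_card_biUnion_add {ι β : Type*} [DecidableEq ι]
    [DecidableEq β] (X : Finset ι) (t : ι → Finset β) (d : ℕ)
    (h : ∀ s ⊆ X, #s ≤ #(s.biUnion t) + d) :
    ∃ M : Finset (ι × β), (∀ e ∈ M, e.1 ∈ X ∧ e.2 ∈ t e.1) ∧
      Set.InjOn Prod.fst (M : Set (ι × β)) ∧ Set.InjOn Prod.snd (M : Set (ι × β)) ∧
      #X ≤ #M + d := by
  -- Hall's theorem, after adding `d` new vertices adjacent to all of `X`
  obtain ⟨F, hF_inj, hF_mem⟩ := X.exists_injective_disjSum_of_card_le_card_biUnion_add t d h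
  let g : X → (ι × β) ⊕ Fin d := fun x => (F x).map (Prod.mk x.1) id
  have hg : Function.Injective g := by
    intro x x' hxx'
    apply hF_inj
    rcases hFx : F x with y | j <;> rcases hFx' : F x' with y' | j' <;>
      simp only [g, hFx, hFx', Sum.map_inl, Sum.map_inr, Sum.inl.injEq, Sum.inr.injEq,
        reduceCtorEq, Prod.mk.injEq, id] at hxx'
    · rw [hxx'.2]
    · rw [hxx']
  have mem_M : ∀ e, e ∈ (univ.image g).toLeft ↔ ∃ x : X, x.1 = e.1 ∧ F x = .inl e.2 := by
    intro e
    simp only [mem_toLeft, mem_image, mem_univ, true_and]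
    constructor
    · rintro ⟨x, hx⟩
      rcases hFx : F x with y | j <;>
        simp only [g, hFx, Sum.map_inl, Sum.map_inr, Sum.inl.injEq, reduceCtorEq] at hx
      subst hx
      exact ⟨x, rfl, hFx⟩
    · rintro ⟨x, hx, hFx⟩
      exact ⟨x, by simp [g, hFx, hx]⟩
  refine ⟨(univ.image g).toLeft, fun e he => ?_, fun e he f hf hef => ?_,
    fun e he f hf hef => ?_, ?_⟩
  · obtain ⟨x, hx, hFx⟩ := (mem_M e).1 he
    have := hF_mem x
    rw [hFx, inl_mem_disjSum, hx] at this
    exact ⟨hx ▸ x.2, this⟩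
  · obtain ⟨x, hx, hFx⟩ := (mem_M e).1 he
    obtain ⟨x', hx', hFx'⟩ := (mem_M f).1 hf
    have : x = x' := Subtype.ext (hx.trans (hef.trans hx'.symm))
    subst this
    exact Prod.ext hef (Sum.inl_injective (hFx.symm.trans hFx'))
  · obtain ⟨x, hx, hFx⟩ := (mem_M e).1 he
    obtain ⟨x', hx', hFx'⟩ := (mem_M f).1 hf
    have : x = x' := hF_inj (hFx.trans ((congrArg Sum.inl hef).trans hFx'.symm))
    subst this
    exact Prod.ext (hx.symm.trans hx') hef
  · calc #X = #(univ.image g) := by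
          rw [card_image_of_injective _ hg, card_univ, Fintype.card_coe]
      _ = #(univ.image g).toLeft + #(univ.image g).toRight := card_toLeft_add_card_toRight.symm
      _ ≤ #(univ.image g).toLeft + d := by
          gcongr
          exact (card_le_univ _).trans_eq (Fintype.card_fin d)

namespace FinGraph

lemma Bipartition.fst_ne_snd [DecidableEq α] {G : FinGraph α} {V₁ V₂ : Finset α}
    (hG : G.Bipartition V₁ V₂) (hV : Disjoint V₁ V₂) :
    ∀ e ∈ G.edges, ∀ f ∈ G.edges, e.1 ≠ f.2 :=
  fun e he f hf h => disjoint_left.1 hV (hG.2 e he).1 (h ▸ (hG.2 f hf).2)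

/-- König's theorem. -/
theorem exists_cover_card_le_nu [DecidableEq α] (G : FinGraph α)
    (hG : ∀ e ∈ G.edges, ∀ f ∈ G.edges, e.1 ≠ f.2) :
    ∃ C : Finset α, (∀ e ∈ G.edges, e.1 ∈ C ∨ e.2 ∈ C) ∧ #C ≤ G.nu := by
  set X := G.edges.image Prod.fst
  set N : α → Finset α := fun x => (G.edges.filter (·.1 = x)).image Prod.snd
  have mem_N : ∀ {x y}, y ∈ N x ↔ (x, y) ∈ G.edges := by
    intro x y
    simp only [N, mem_image, mem_filter]
    exact ⟨by rintro ⟨e, ⟨he, rfl⟩, rfl⟩; exact he, fun h => ⟨_, ⟨h, rfl⟩, rfl⟩⟩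
  -- `S` has maximal deficiency `#S - #N(S)`; then `(X \ S) ∪ N(S)` is a cover of the right size.
  obtain ⟨S, hSX, hSmax⟩ := X.powerset.exists_max_image
    (fun s => (#s : ℤ) - #(s.biUnion N)) ⟨∅, empty_mem_powerset _⟩
  have hSX : S ⊆ X := mem_powerset.1 hSX
  have hNS : #(S.biUnion N) ≤ #S := by
    have := hSmax ∅ (empty_mem_powerset _)
    simp only [card_empty, biUnion_empty, Nat.cast_zero, sub_zero] at this
    omega
  obtain ⟨M, hMt, hM₁, hM₂, hMcard⟩ := X.exists_matching_of_card_le_card_biUnion_add N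
    (#S - #(S.biUnion N)) fun s hs => by
      have := hSmax s (mem_powerset.2 hs)
      omega
  have hM : G.IsMatching M := by
    have hMG : M ⊆ G.edges := fun e he => mem_N.1 (hMt e he).2
    refine ⟨hMG, fun e he f hf hef => ⟨fun h => hef (hM₁ he hf h), hG e (hMG he) f (hMG hf),
      fun h => hG f (hMG hf) e (hMG he) h.symm, fun h => hef (hM₂ he hf h)⟩⟩
  refine ⟨(X \ S) ∪ S.biUnion N, fun e he => ?_, ?_⟩
  · by_cases h : e.1 ∈ S
    · exact Or.inr (mem_union_right _ (mem_biUnion.2 ⟨e.1, h, mem_N.2 he⟩))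
    · exact Or.inl (mem_union_left _ (mem_sdiff.2 ⟨mem_image_of_mem _ he, h⟩))
  · calc #((X \ S) ∪ S.biUnion N) ≤ #(X \ S) + #(S.biUnion N) := card_union_le _ _
      _ ≤ #M := by
          have := card_le_card hSX
          rw [card_sdiff_of_subset hSX]
          omega
      _ ≤ G.nu := card_le_nu hM

end FinGraph

lemma IntegralReal.sum {ι : Type*} {s : Finset ι} {f : ι → ℝ}
    (h : ∀ i ∈ s, IntegralReal (f i)) : IntegralReal (∑ i ∈ s, f i) := by
  refine sum_induction f IntegralReal ?_ ⟨0, by simp⟩ h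
  rintro _ _ ⟨m, rfl⟩ ⟨n, rfl⟩
  exact ⟨m + n, by push_cast; ring⟩

lemma IntegralReal.le_of_lt_add_one {x y : ℝ} (hx : IntegralReal x) (hy : IntegralReal y)
    (h : x < y + 1) : x ≤ y := by
  obtain ⟨m, rfl⟩ := hx
  obtain ⟨n, rfl⟩ := hy
  exact_mod_cast Int.le_of_lt_add_one (by exact_mod_cast h)

lemma one_le_min_add_min {x y : ℝ} (hx : 0 ≤ x) (hy : 0 ≤ y) (h : 1 ≤ x + y) :
    1 ≤ min x 1 + min y 1 := by
  simp only [min_def]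
  split_ifs <;> linarith

lemma min_sub_min_le {x y δ c : ℝ} (h : x - y ≤ δ) (hδ : 0 ≤ δ) :
    min x c - min y c ≤ δ := by
  simp only [min_def]
  split_ifs <;> linarith

lemma mul_le_add_mul_mul {ε a w : ℝ} (hε : 0 ≤ ε) (h : ε * (1 + |a|) ≤ 1) (hw : 0 ≤ w) :
    ε * w ≤ w + ε * (a * w) := by
  nlinarith [mul_le_mul_of_nonneg_right h hw,
    mul_le_mul_of_nonneg_left (neg_abs_le a) (mul_nonneg hε hw)]

lemma mul_sub_mul_le_abs {a x y : ℝ} (hx₀ : 0 ≤ x) (hx₁ : x ≤ 1) (hy₀ : 0 ≤ y)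
    (hy₁ : y ≤ 1) :
    a * x - a * y ≤ |a| := by
  rw [← mul_sub]
  calc a * (x - y) ≤ |a * (x - y)| := le_abs_self _
    _ = |a| * |x - y| := abs_mul _ _
    _ ≤ |a| * 1 := by gcongr; exact abs_sub_le_iff.2 ⟨by linarith, by linarith⟩
    _ = |a| := mul_one _

def sumY (k : ℕ) (G : ℕ → FinGraph α) (p : MultiStagePt α) : ℝ :=
  ∑ i ∈ range k, ∑ v ∈ (G i).verts, p.1 i v

def capAtOne (p : MultiStagePt α) : MultiStagePt α :=
  (fun i v => min (p.1 i v) 1, p.2)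

lemma sumY_capAtOne_le (k : ℕ) (G : ℕ → FinGraph α) (p : MultiStagePt α) :
    sumY k G (capAtOne p) ≤ sumY k G p :=
  sum_le_sum fun _ _ => sum_le_sum fun _ _ => min_le_left _ _

section MultiStage

variable [DecidableEq α]

/-- The objective `F_ε` of the statement. -/
def penalizedObj (k : ℕ) (G : ℕ → FinGraph α) (a β b : ℕ → α → ℝ) (ε : ℝ)
    (p : MultiStagePt α) : ℝ :=
  sumY k G p + ε * objCk k G a β b p

def coverPoint (C : ℕ → Finset α) : MultiStagePt α :=
  (fun i v => if v ∈ C i then 1 else 0, fun _ _ => 1, fun _ _ => 1)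

def coeffNorm (k : ℕ) (G : ℕ → FinGraph α) (a β b : ℕ → α → ℝ) : ℝ :=
  ∑ i ∈ range k, ∑ v ∈ (G i).verts, |a i v|
    + ∑ i ∈ range (k - 1), ∑ v ∈ (G i).verts ∩ (G (i + 1)).verts, (β i v + b i v)

variable {k : ℕ} {G : ℕ → FinGraph α} {a β b : ℕ → α → ℝ} {ε : ℝ}

lemma capAtOne_mem_regionDk (hG : ∀ i < k, (G i).WF) {p : MultiStagePt α}
    (hp : p ∈ regionDk k G) : capAtOne p ∈ regionDk k G := by
  obtain ⟨hstage, hlink⟩ := hp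
  refine ⟨fun i hi => ⟨fun v hv => le_min ((hstage i hi).1 v hv) zero_le_one, fun e he => ?_⟩,
    fun i hi v hv => ?_⟩
  · obtain ⟨he₁, he₂, -⟩ := hG i hi e he
    exact one_le_min_add_min ((hstage i hi).1 _ he₁) ((hstage i hi).1 _ he₂)
      ((hstage i hi).2 e he)
  · obtain ⟨h₁, h₂, h₃, h₄⟩ := hlink i hi v hv
    exact ⟨min_sub_min_le h₁ h₃, min_sub_min_le h₂ h₄, h₃, h₄⟩

lemma coverPoint_mem_regionDk {C : ℕ → Finset α}
    (hC : ∀ i < k, ∀ e ∈ (G i).edges, e.1 ∈ C i ∨ e.2 ∈ C i) :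
    coverPoint C ∈ regionDk k G := by
  refine ⟨fun i hi => ⟨fun v _ => ?_, fun e he => ?_⟩, fun i _ v _ => ?_⟩
  · simp only [coverPoint]
    split_ifs <;> norm_num
  · simp only [coverPoint]
    rcases hC i hi e he with h | h <;> simp only [h, if_true] <;> split_ifs <;> norm_num
  · simp only [coverPoint]
    refine ⟨?_, ?_, zero_le_one, zero_le_one⟩ <;> split_ifs <;> norm_num

lemma sumY_coverPoint_le (C : ℕ → Finset α) :
    sumY k G (coverPoint C) ≤ ∑ i ∈ range k, (#(C i) : ℝ) := by
  refine sum_le_sum fun i _ => ?_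
  simp only [coverPoint, sum_boole]
  exact_mod_cast card_le_card fun v hv => (mem_filter.1 hv).2

lemma sum_abs_le_coeffNorm
    (hβ : ∀ i, i + 1 < k → ∀ v ∈ (G i).verts ∩ (G (i + 1)).verts, 0 ≤ β i v)
    (hb : ∀ i, i + 1 < k → ∀ v ∈ (G i).verts ∩ (G (i + 1)).verts, 0 ≤ b i v) :
    ∑ i ∈ range k, ∑ v ∈ (G i).verts, |a i v| ≤ coeffNorm k G a β b :=
  le_add_of_nonneg_right <| sum_nonneg fun i hi => sum_nonneg fun v hv => by
    have hi : i + 1 < k := by have := mem_range.1 hi; omega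
    exact add_nonneg (hβ i hi v hv) (hb i hi v hv)

lemma coeffNorm_nonneg
    (hβ : ∀ i, i + 1 < k → ∀ v ∈ (G i).verts ∩ (G (i + 1)).verts, 0 ≤ β i v)
    (hb : ∀ i, i + 1 < k → ∀ v ∈ (G i).verts ∩ (G (i + 1)).verts, 0 ≤ b i v) :
    0 ≤ coeffNorm k G a β b :=
  (sum_nonneg fun _ _ => sum_nonneg fun _ _ => abs_nonneg _).trans (sum_abs_le_coeffNorm hβ hb)

lemma abs_le_coeffNorm
    (hβ : ∀ i, i + 1 < k → ∀ v ∈ (G i).verts ∩ (G (i + 1)).verts, 0 ≤ β i v)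
    (hb : ∀ i, i + 1 < k → ∀ v ∈ (G i).verts ∩ (G (i + 1)).verts, 0 ≤ b i v)
    {i : ℕ} (hi : i < k) {v : α} (hv : v ∈ (G i).verts) :
    |a i v| ≤ coeffNorm k G a β b :=
  calc |a i v| ≤ ∑ v ∈ (G i).verts, |a i v| :=
        single_le_sum (f := fun v => |a i v|) (fun _ _ => abs_nonneg _) hv
    _ ≤ ∑ i ∈ range k, ∑ v ∈ (G i).verts, |a i v| :=
        single_le_sum (f := fun i => ∑ v ∈ (G i).verts, |a i v|)
          (fun _ _ => sum_nonneg fun _ _ => abs_nonneg _) (mem_range.2 hi)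
    _ ≤ coeffNorm k G a β b := sum_abs_le_coeffNorm hβ hb

lemma add_penalizedObj_capAtOne_le (hε : 0 ≤ ε)
    (ha : ∀ i < k, ∀ v ∈ (G i).verts, ε * (1 + |a i v|) ≤ 1) (p : MultiStagePt α) :
    penalizedObj k G a β b ε (capAtOne p) + ε * (sumY k G p - sumY k G (capAtOne p)) ≤
      penalizedObj k G a β b ε p := by
  have key : ∑ i ∈ range k, ∑ v ∈ (G i).verts, ε * (p.1 i v - min (p.1 i v) 1) ≤
      ∑ i ∈ range k, ∑ v ∈ (G i).verts,
        ((p.1 i v - min (p.1 i v) 1) + ε * (a i v * (p.1 i v - min (p.1 i v) 1))) :=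
    sum_le_sum fun i hi => sum_le_sum fun v hv =>
      mul_le_add_mul_mul hε (ha i (mem_range.1 hi) v hv) (sub_nonneg.2 (min_le_left _ _))
  simp only [mul_sub, sum_add_distrib, sum_sub_distrib, ← mul_sum] at key
  simp only [penalizedObj, sumY, objCk, capAtOne, mul_add, mul_sub]
  linarith

lemma objCk_sub_objCk_le_coeffNorm
    (hβ : ∀ i, i + 1 < k → ∀ v ∈ (G i).verts ∩ (G (i + 1)).verts, 0 ≤ β i v)
    (hb : ∀ i, i + 1 < k → ∀ v ∈ (G i).verts ∩ (G (i + 1)).verts, 0 ≤ b i v)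
    {p q : MultiStagePt α}
    (hpy : ∀ i < k, ∀ v ∈ (G i).verts, 0 ≤ p.1 i v ∧ p.1 i v ≤ 1)
    (hqy : ∀ i < k, ∀ v ∈ (G i).verts, 0 ≤ q.1 i v ∧ q.1 i v ≤ 1)
    (hp : ∀ i, i + 1 < k → ∀ v ∈ (G i).verts ∩ (G (i + 1)).verts,
      p.2.1 i v ≤ 1 ∧ p.2.2 i v ≤ 1)
    (hq : ∀ i, i + 1 < k → ∀ v ∈ (G i).verts ∩ (G (i + 1)).verts,
      0 ≤ q.2.1 i v ∧ 0 ≤ q.2.2 i v) :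
    objCk k G a β b p - objCk k G a β b q ≤ coeffNorm k G a β b := by
  have hy : ∑ i ∈ range k, ∑ v ∈ (G i).verts, (a i v * p.1 i v - a i v * q.1 i v) ≤
      ∑ i ∈ range k, ∑ v ∈ (G i).verts, |a i v| :=
    sum_le_sum fun i hi => sum_le_sum fun v hv => by
      obtain ⟨hp₀, hp₁⟩ := hpy i (mem_range.1 hi) v hv
      obtain ⟨hq₀, hq₁⟩ := hqy i (mem_range.1 hi) v hv
      exact mul_sub_mul_le_abs hp₀ hp₁ hq₀ hq₁
  have hδ : ∑ i ∈ range (k - 1), ∑ v ∈ (G i).verts ∩ (G (i + 1)).verts,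
      ((β i v * p.2.1 i v + b i v * p.2.2 i v) - (β i v * q.2.1 i v + b i v * q.2.2 i v)) ≤
      ∑ i ∈ range (k - 1), ∑ v ∈ (G i).verts ∩ (G (i + 1)).verts, (β i v + b i v) :=
    sum_le_sum fun i hi => sum_le_sum fun v hv => by
      have hi : i + 1 < k := by have := mem_range.1 hi; omega
      obtain ⟨hp₁, hp₂⟩ := hp i hi v hv
      obtain ⟨hq₁, hq₂⟩ := hq i hi v hv
      nlinarith [hβ i hi v hv, hb i hi v hv]
  simp only [sum_sub_distrib] at hy hδ
  simp only [objCk, coeffNorm]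
  linarith

section Minimizer

variable {μ : MultiStagePt α} (hε : 0 < ε)
  (ha : ∀ i < k, ∀ v ∈ (G i).verts, ε * (1 + |a i v|) ≤ 1) (hG : ∀ i < k, (G i).WF)
  (hmem : μ ∈ regionDk k G) (hμ : IsMinOn (penalizedObj k G a β b ε) (regionDk k G) μ)
include hε ha hG hmem hμ

lemma sumY_capAtOne_eq_of_isMinOn : sumY k G (capAtOne μ) = sumY k G μ := by
  have hcap := add_penalizedObj_capAtOne_le (β := β) (b := b) hε.le ha μ
  have hmin := isMinOn_iff.1 hμ _ (capAtOne_mem_regionDk hG hmem)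
  exact le_antisymm (sumY_capAtOne_le k G μ) (by nlinarith)

lemma isMinOn_capAtOne_of_isMinOn :
    IsMinOn (penalizedObj k G a β b ε) (regionDk k G) (capAtOne μ) := by
  have hcap := add_penalizedObj_capAtOne_le (β := β) (b := b) hε.le ha μ
  rw [sumY_capAtOne_eq_of_isMinOn hε ha hG hmem hμ, sub_self, mul_zero, add_zero] at hcap
  exact isMinOn_iff.2 fun p hp => hcap.trans (isMinOn_iff.1 hμ p hp)

end Minimizer

lemma sumY_lt_sum_nu_add_one_of_isMinOn
    (hβ : ∀ i, i + 1 < k → ∀ v ∈ (G i).verts ∩ (G (i + 1)).verts, 0 ≤ β i v)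
    (hb : ∀ i, i + 1 < k → ∀ v ∈ (G i).verts ∩ (G (i + 1)).verts, 0 ≤ b i v)
    (hε : 0 ≤ ε) (hεA : ε * coeffNorm k G a β b < 1)
    (hG : ∀ i < k, ∀ e ∈ (G i).edges, ∀ f ∈ (G i).edges, e.1 ≠ f.2)
    {q : MultiStagePt α} (hq : q ∈ regionDk k G)
    (hq₁ : ∀ i < k, ∀ v ∈ (G i).verts, q.1 i v ≤ 1)
    (hqmin : IsMinOn (penalizedObj k G a β b ε) (regionDk k G) q) :
    sumY k G q < ∑ i ∈ range k, ((G i).nu : ℝ) + 1 := by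
  choose! C hCcover hCcard using fun i hi => (G i).exists_cover_card_le_nu (hG i hi)
  have hmin := isMinOn_iff.1 hqmin _ (coverPoint_mem_regionDk hCcover)
  have hobj := objCk_sub_objCk_le_coeffNorm (a := a) hβ hb (p := coverPoint C) (q := q)
    (fun i _ v _ => by simp only [coverPoint]; split_ifs <;> norm_num)
    (fun i hi v hv => ⟨(hq.1 i hi).1 v hv, hq₁ i hi v hv⟩)
    (fun _ _ _ _ => ⟨le_rfl, le_rfl⟩)
    (fun i hi v hv => ⟨(hq.2 i hi v hv).2.2.1, (hq.2 i hi v hv).2.2.2⟩)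
  have hsumC : sumY k G (coverPoint C) ≤ ∑ i ∈ range k, ((G i).nu : ℝ) :=
    (sumY_coverPoint_le C).trans
      (sum_le_sum fun i hi => by exact_mod_cast hCcard i (mem_range.1 hi))
  simp only [penalizedObj] at hmin
  nlinarith [mul_le_mul_of_nonneg_left hobj hε]

lemma sum_eq_nu_of_sumY_le (hG : ∀ i < k, (G i).WF) {μ : MultiStagePt α}
    (hμ : μ ∈ regionDk k G) (h : sumY k G μ ≤ ∑ i ∈ range k, ((G i).nu : ℝ)) :
    ∀ i < k, ∑ v ∈ (G i).verts, μ.1 i v = (G i).nu := by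
  have hstage : ∀ i ∈ range k, ((G i).nu : ℝ) ≤ ∑ v ∈ (G i).verts, μ.1 i v :=
    fun i hi => nu_le_sum_of_fractional_cover (hG i (mem_range.1 hi)) (hμ.1 i (mem_range.1 hi)).1
      (hμ.1 i (mem_range.1 hi)).2
  exact fun i hi => ((sum_eq_sum_iff_of_le hstage).1 (le_antisymm (sum_le_sum hstage) h) i
    (mem_range.2 hi)).symm

end MultiStage

theorem integral_minimizer_regionDk_minimizes_regionPk_general [DecidableEq α]
    (k : ℕ) (G : ℕ → FinGraph α) (Vs Vt : Finset α)
    (hdisj : Disjoint Vs Vt)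
    (hWF : ∀ i < k, (G i).WF) (hbip : ∀ i < k, (G i).Bipartition Vs Vt)
    (a β b : ℕ → α → ℝ)
    (hβ : ∀ i, i + 1 < k → ∀ v ∈ (G i).verts ∩ (G (i + 1)).verts, 0 ≤ β i v)
    (hb : ∀ i, i + 1 < k → ∀ v ∈ (G i).verts ∩ (G (i + 1)).verts, 0 ≤ b i v)
    (ε : ℝ)
    (hε : ε = 1 / (1 + ∑ i ∈ Finset.range k, ∑ v ∈ (G i).verts, |a i v|
        + ∑ i ∈ Finset.range (k - 1), ∑ v ∈ (G i).verts ∩ (G (i + 1)).verts,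
            (β i v + b i v)))
    (μ : MultiStagePt α)
    (hint1 : ∀ i < k, ∀ v ∈ (G i).verts, IntegralReal (μ.1 i v))
    (hmem : μ ∈ regionDk k G)
    (hmin : ∀ p ∈ regionDk k G,
        (∑ i ∈ Finset.range k, ∑ v ∈ (G i).verts, μ.1 i v)
            + ε * objCk k G a β b μ ≤
          (∑ i ∈ Finset.range k, ∑ v ∈ (G i).verts, p.1 i v)
            + ε * objCk k G a β b p) :
    (∀ i < k, ∑ v ∈ (G i).verts, μ.1 i v = ((G i).nu : ℝ)) ∧
    μ ∈ regionPk k G ∧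
    ∀ p ∈ regionPk k G, objCk k G a β b μ ≤ objCk k G a β b p := by
  have hA : 0 ≤ coeffNorm k G a β b := coeffNorm_nonneg hβ hb
  replace hε : ε = 1 / (1 + coeffNorm k G a β b) := by rw [hε, add_assoc]; rfl
  have hε₀ : 0 < ε := by rw [hε]; positivity
  have hεA : ε * coeffNorm k G a β b < 1 := by
    rw [hε, one_div_mul_eq_div, div_lt_one (by linarith)]
    linarith
  have hεa : ∀ i < k, ∀ v ∈ (G i).verts, ε * (1 + |a i v|) ≤ 1 := fun i hi v hv => by
    rw [hε, one_div_mul_eq_div, div_le_one (by linarith)]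
    linarith [abs_le_coeffNorm (a := a) hβ hb hi hv]
  have hμ : IsMinOn (penalizedObj k G a β b ε) (regionDk k G) μ := isMinOn_iff.2 hmin
  have hlt := sumY_lt_sum_nu_add_one_of_isMinOn hβ hb hε₀.le hεA
    (fun i hi => (hbip i hi).fst_ne_snd hdisj) (capAtOne_mem_regionDk hWF hmem)
    (fun _ _ _ _ => min_le_right _ _) (isMinOn_capAtOne_of_isMinOn hε₀ hεa hWF hmem hμ)
  rw [sumY_capAtOne_eq_of_isMinOn hε₀ hεa hWF hmem hμ] at hlt
  have heq := sum_eq_nu_of_sumY_le hWF hmem <| IntegralReal.le_of_lt_add_one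
    (IntegralReal.sum fun i hi => IntegralReal.sum fun v hv => hint1 i (mem_range.1 hi) v hv)
    (IntegralReal.sum fun i _ => ⟨(G i).nu, by simp⟩) hlt
  refine ⟨heq, ⟨hmem, heq⟩, fun p ⟨hpD, hp⟩ => ?_⟩
  have hsum : sumY k G p = sumY k G μ :=
    sum_congr rfl fun i hi => (hp i (mem_range.1 hi)).trans (heq i (mem_range.1 hi)).symm
  have hpmin := isMinOn_iff.1 hμ p hpD
  rw [penalizedObj, penalizedObj, hsum] at hpmin
  exact le_of_mul_le_mul_left (by linarith) hε₀

/-- Let `a^i` be arbitrary and `β^i, b^i` nonnegative coefficient vectors,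
and let `ε = 1/(1 + Σᵢ Σ_{V_i}|a^i| + Σᵢ Σ_{V_i ∩ V_{i+1}}(β^i + b^i))`.  If `μ̂` is an integral
minimizer over the region `D_k` of the objective
`F_ε(μ) = Σᵢ Σ_{V_i} y^i + ε·(Σᵢ Σ a^i y^i + Σᵢ Σ (β^i δ^i + b^i d^i))`, then `μ̂` satisfies the
matching-number equalities (hence `μ̂ ∈ P_k`) and minimizes
`G(μ) = Σᵢ Σ a^i y^i + Σᵢ Σ (β^i δ^i + b^i d^i)` over `P_k`. -/
theorem integral_minimizer_regionDk_minimizes_regionPk [DecidableEq α]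
    (k : ℕ) (hk : 1 ≤ k) (G : ℕ → FinGraph α) (Vs Vt : Finset α)
    (hdisj : Disjoint Vs Vt)
    (hWF : ∀ i < k, (G i).WF) (hbip : ∀ i < k, (G i).Bipartition Vs Vt)
    (a β b : ℕ → α → ℝ)
    (hβ : ∀ i, i + 1 < k → ∀ v ∈ (G i).verts ∩ (G (i + 1)).verts, 0 ≤ β i v)
    (hb : ∀ i, i + 1 < k → ∀ v ∈ (G i).verts ∩ (G (i + 1)).verts, 0 ≤ b i v)
    (ε : ℝ)
    (hε : ε = 1 / (1 + ∑ i ∈ Finset.range k, ∑ v ∈ (G i).verts, |a i v|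
        + ∑ i ∈ Finset.range (k - 1), ∑ v ∈ (G i).verts ∩ (G (i + 1)).verts,
            (β i v + b i v)))
    (μ : MultiStagePt α)
    (hint1 : ∀ i < k, ∀ v ∈ (G i).verts, IntegralReal (μ.1 i v))
    (hint2 : ∀ i, i + 1 < k → ∀ v ∈ (G i).verts ∩ (G (i + 1)).verts,
        IntegralReal (μ.2.1 i v) ∧ IntegralReal (μ.2.2 i v))
    (hmem : μ ∈ regionDk k G)
    (hmin : ∀ p ∈ regionDk k G,
        (∑ i ∈ Finset.range k, ∑ v ∈ (G i).verts, μ.1 i v)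
            + ε * objCk k G a β b μ ≤
          (∑ i ∈ Finset.range k, ∑ v ∈ (G i).verts, p.1 i v)
            + ε * objCk k G a β b p) :
    (∀ i < k, ∑ v ∈ (G i).verts, μ.1 i v = ((G i).nu : ℝ)) ∧
    μ ∈ regionPk k G ∧
    ∀ p ∈ regionPk k G, objCk k G a β b μ ≤ objCk k G a β b p :=
  integral_minimizer_regionDk_minimizes_regionPk_general k G Vs Vt hdisj hWF hbip a β b hβ hb ε hε μ
    hint1 hmem hmin
end
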